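/- arXiv:2410.15129 — 2 statements merged into one kernel-verified Lean document; each statement's English description precedes it below -/
import Mathlib

section
/- PQE energy error bound: Let H be Hermitian with lowest eigenvalue E_gs isolated from the rest of the spectrum, and E_es the second-lowest spectral point. Let {Φ_ν} be an orthonormal basis, E = ⟨Φ₀, HΦ₀⟩, and r_ν = ⟨Φ_ν, HΦ₀⟩ for ν ≥ 1. If E < E_es, then E − (Σ_{ν≥1}|r_ν|²)/(E_es − E) ≤ E_gs ≤ E. -/
/-! Temple's inequality. Every eigenvalue `μ` of `T` is `Egs` or at least `Ees`, so
`(μ - Egs) (μ - Ees) ≥ 0` and the operator `(T - Egs)(T - Ees)` is positive semidefinite.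
At the unit vector `Φ₀` this reads `‖T Φ₀‖² - (Egs + Ees) E + Egs Ees ≥ 0`, and Parseval in
the basis `Φ` gives `‖T Φ₀‖² = E² + Σ_{ν ≥ 1} |r_ν|²`; hence `(E - Egs)(Ees - E) ≤ Σ_{ν ≥ 1} |r_ν|²`.
The upper bound `Egs ≤ E` is the variational principle. -/

open Module End RCLike Finset
open scoped InnerProductSpace

lemma OrthonormalBasis.sq_norm_eq_sq_norm_inner_add_sum_erase {ι 𝕜 E : Type*} [Fintype ι]
    [DecidableEq ι] [RCLike 𝕜] [NormedAddCommGroup E] [InnerProductSpace 𝕜 E]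
    (b : OrthonormalBasis ι 𝕜 E) (i : ι) (x : E) :
    ‖x‖ ^ 2 = ‖⟪b i, x⟫_𝕜‖ ^ 2 + ∑ j ∈ univ.erase i, ‖⟪b j, x⟫_𝕜‖ ^ 2 := by
  rw [← b.sum_sq_norm_inner_right, ← add_sum_erase _ _ (mem_univ i)]

namespace LinearMap.IsSymmetric

variable {𝕜 E : Type*} [RCLike 𝕜] [NormedAddCommGroup E] [InnerProductSpace 𝕜 E]
  [FiniteDimensional 𝕜 E] {T : E →ₗ[𝕜] E}

lemma inner_eigenvectorBasis_apply (hT : T.IsSymmetric) {n : ℕ} (hn : finrank 𝕜 E = n)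
    (i : Fin n) (x : E) :
    ⟪hT.eigenvectorBasis hn i, T x⟫_𝕜 = hT.eigenvalues hn i * ⟪hT.eigenvectorBasis hn i, x⟫_𝕜 := by
  rw [← hT, apply_eigenvectorBasis, inner_smul_left, conj_ofReal]

lemma re_inner_apply_self_eq_sum (hT : T.IsSymmetric) {n : ℕ} (hn : finrank 𝕜 E = n) (x : E) :
    re ⟪x, T x⟫_𝕜 = ∑ i, hT.eigenvalues hn i * ‖⟪hT.eigenvectorBasis hn i, x⟫_𝕜‖ ^ 2 := by
  rw [← (hT.eigenvectorBasis hn).sum_inner_mul_inner, map_sum]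
  refine sum_congr rfl fun i _ => ?_
  rw [inner_eigenvectorBasis_apply, mul_left_comm, ← inner_conj_symm x, RCLike.conj_mul,
    ← ofReal_pow, ← ofReal_mul, ofReal_re]

lemma sq_norm_apply_eq_sum (hT : T.IsSymmetric) {n : ℕ} (hn : finrank 𝕜 E = n) (x : E) :
    ‖T x‖ ^ 2 = ∑ i, hT.eigenvalues hn i ^ 2 * ‖⟪hT.eigenvectorBasis hn i, x⟫_𝕜‖ ^ 2 := by
  simp_rw [← (hT.eigenvectorBasis hn).sum_sq_norm_inner_right (T x), inner_eigenvectorBasis_apply,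
    norm_mul, mul_pow, norm_ofReal, sq_abs]

theorem quadratic_nonneg_of_forall_hasEigenvalue (hT : T.IsSymmetric) {c₀ c₁ c₂ : ℝ}
    (h : ∀ μ : ℝ, HasEigenvalue T (μ : 𝕜) → 0 ≤ c₀ + c₁ * μ + c₂ * μ ^ 2) (x : E) :
    0 ≤ c₀ * ‖x‖ ^ 2 + c₁ * re ⟪x, T x⟫_𝕜 + c₂ * ‖T x‖ ^ 2 := by
  have hn : finrank 𝕜 E = finrank 𝕜 E := rfl
  rw [← (hT.eigenvectorBasis hn).sum_sq_norm_inner_right x, hT.re_inner_apply_self_eq_sum hn,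
    hT.sq_norm_apply_eq_sum hn, mul_sum, mul_sum, mul_sum, ← sum_add_distrib, ← sum_add_distrib]
  refine sum_nonneg fun i _ => ?_
  have := h _ (hT.hasEigenvalue_eigenvalues hn i)
  nlinarith [sq_nonneg ‖⟪hT.eigenvectorBasis hn i, x⟫_𝕜‖]

theorem mul_sq_norm_le_re_inner_apply_self (hT : T.IsSymmetric) {a : ℝ}
    (h : ∀ μ : ℝ, HasEigenvalue T (μ : 𝕜) → a ≤ μ) (x : E) :
    a * ‖x‖ ^ 2 ≤ re ⟪x, T x⟫_𝕜 := by
  have := hT.quadratic_nonneg_of_forall_hasEigenvalue (c₀ := -a) (c₁ := 1) (c₂ := 0)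
    (fun μ hμ => by linarith [h μ hμ]) x
  linarith

theorem add_mul_re_inner_apply_self_le (hT : T.IsSymmetric) {a b : ℝ}
    (h : ∀ μ : ℝ, HasEigenvalue T (μ : 𝕜) → 0 ≤ (μ - a) * (μ - b)) (x : E) :
    (a + b) * re ⟪x, T x⟫_𝕜 ≤ ‖T x‖ ^ 2 + a * b * ‖x‖ ^ 2 := by
  have := hT.quadratic_nonneg_of_forall_hasEigenvalue (c₀ := a * b) (c₁ := -(a + b)) (c₂ := 1)
    (fun μ hμ => by linarith [h μ hμ]) x
  linarith

end LinearMap.IsSymmetric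

theorem pqe_energy_error_bound_general
    {V : Type*} [NormedAddCommGroup V] [InnerProductSpace ℂ V]
    [FiniteDimensional ℂ V] {d : ℕ}
    (T : V →ₗ[ℂ] V) (hT : T.IsSymmetric)
    (Egs Ees : ℝ)
    (hgs_min : ∀ μ : ℝ, Module.End.HasEigenvalue T (μ : ℂ) → Egs ≤ μ)
    (hes_second : ∀ μ : ℝ, Module.End.HasEigenvalue T (μ : ℂ) → μ ≠ Egs → Ees ≤ μ)
    (Φ : OrthonormalBasis (Fin (d + 1)) ℂ V)
    (Eψ : ℝ)
    (hE : (inner ℂ (Φ 0) (T (Φ 0)) : ℂ) = (Eψ : ℂ))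
    (hlt : Eψ < Ees) :
    Eψ - (∑ ν ∈ Finset.univ.erase 0, ‖(inner ℂ (Φ ν) (T (Φ 0)) : ℂ)‖ ^ 2)
        / (Ees - Eψ) ≤ Egs ∧ Egs ≤ Eψ := by
  set S := ∑ ν ∈ univ.erase 0, ‖⟪Φ ν, T (Φ 0)⟫_ℂ‖ ^ 2
  have hnorm : ‖Φ 0‖ = 1 := Φ.orthonormal.1 0
  have henergy : re ⟪Φ 0, T (Φ 0)⟫_ℂ = Eψ := by simp [hE]
  have hvariance : ‖T (Φ 0)‖ ^ 2 = Eψ ^ 2 + S := by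
    rw [Φ.sq_norm_eq_sq_norm_inner_add_sum_erase 0, hE, Complex.norm_real, Real.norm_eq_abs,
      sq_abs]
  have hgap : ∀ μ : ℝ, HasEigenvalue T (μ : ℂ) → 0 ≤ (μ - Egs) * (μ - Ees) := by
    intro μ hμ
    by_cases hμgs : μ = Egs
    · simp [hμgs]
    · exact mul_nonneg (by linarith [hgs_min μ hμ]) (by linarith [hes_second μ hμ hμgs])
  have hvar := hT.mul_sq_norm_le_re_inner_apply_self hgs_min (Φ 0)
  have htemple := hT.add_mul_re_inner_apply_self_le hgap (Φ 0)
  rw [hnorm, henergy] at hvar htemple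
  rw [hvariance] at htemple
  refine ⟨?_, by linarith⟩
  have : Eψ - Egs ≤ S / (Ees - Eψ) := by
    rw [le_div_iff₀ (by linarith)]
    linarith
  linarith

/-- PQE energy error bound: with `Egs` the lowest eigenvalue, `Ees` the
second-lowest spectral point, and residues `r_ν = ⟨Φ_ν, T Φ₀⟩`, if the energy
`E = ⟨Φ₀, T Φ₀⟩` satisfies `E < Ees`, then
`E − (Σ_{ν≥1}|r_ν|²)/(Ees − E) ≤ Egs ≤ E`. -/
theorem pqe_energy_error_bound
    {V : Type*} [NormedAddCommGroup V] [InnerProductSpace ℂ V]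
    [FiniteDimensional ℂ V] {d : ℕ}
    (T : V →ₗ[ℂ] V) (hT : T.IsSymmetric)
    (Egs Ees : ℝ)
    (hgs_eig : Module.End.HasEigenvalue T (Egs : ℂ))
    (hgs_min : ∀ μ : ℝ, Module.End.HasEigenvalue T (μ : ℂ) → Egs ≤ μ)
    (hes_eig : Module.End.HasEigenvalue T (Ees : ℂ))
    (hgs_lt_es : Egs < Ees)
    (hes_second : ∀ μ : ℝ, Module.End.HasEigenvalue T (μ : ℂ) → μ ≠ Egs → Ees ≤ μ)
    (Φ : OrthonormalBasis (Fin (d + 1)) ℂ V)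
    (Eψ : ℝ)
    (hE : (inner ℂ (Φ 0) (T (Φ 0)) : ℂ) = (Eψ : ℂ))
    (hlt : Eψ < Ees) :
    Eψ - (∑ ν ∈ Finset.univ.erase 0, ‖(inner ℂ (Φ ν) (T (Φ 0)) : ℂ)‖ ^ 2)
        / (Ees - Eψ) ≤ Egs ∧ Egs ≤ Eψ :=
  pqe_energy_error_bound_general T hT Egs Ees hgs_min hes_second Φ Eψ hE hlt
end

section
/- Contraction property of the modified Newton map: under the Newton–Kantorovich hypotheses, the map G(t) = t − J(t₀)⁻¹F(t) is Lipschitz with constant q = 1 − √(1 − 2ηL) < 1 on the closed ball B(t₀, (1 − √(1 − 2Lη))/L), and maps this ball into itself. -/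
/-!
The modified Newton map `G t = t - J(t₀)⁻¹ F t` has derivative `I - J(t₀)⁻¹ J t`, whose norm is
at most `L ‖t - t₀‖`. On the ball of radius `r*` this is at most `L r* = q`, so the mean value
inequality makes `G` `q`-Lipschitz there. Integrating the linear bound along the segment from `t₀`
gives the sharper `‖G t - G t₀‖ ≤ L / 2 ‖t - t₀‖²`, and together with `‖G t₀ - t₀‖ ≤ η` this
puts `G t` within `L / 2 r*² + η = r*` of `t₀`.
-/

open Metric Set

section MeanValue

variable {E F : Type*} [NormedAddCommGroup E] [NormedSpace ℝ E]
  [NormedAddCommGroup F] [NormedSpace ℝ F]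

theorem norm_sub_le_half_of_norm_deriv_le_mul {g g' : ℝ → F} {C : ℝ}
    (hg : ∀ θ ∈ Icc (0 : ℝ) 1, HasDerivAt g (g' θ) θ)
    (hbound : ∀ θ ∈ Icc (0 : ℝ) 1, ‖g' θ‖ ≤ C * θ) :
    ‖g 1 - g 0‖ ≤ C / 2 := by
  have hB : ∀ θ : ℝ, HasDerivAt (fun θ => C / 2 * θ ^ 2) (C * θ) θ := fun θ =>
    ((hasDerivAt_pow 2 θ).const_mul (C / 2)).congr_deriv (by push_cast; ring)
  have key := image_norm_le_of_norm_deriv_right_le_deriv_boundary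
    (f := fun θ => g θ - g 0) (a := 0) (b := 1)
    (fun θ hθ => (hg θ hθ).continuousAt.continuousWithinAt.sub continuousWithinAt_const)
    (fun θ hθ => ((hg θ (Ico_subset_Icc_self hθ)).sub_const (g 0)).hasDerivWithinAt)
    (by simp) hB (fun θ hθ => hbound θ (Ico_subset_Icc_self hθ)) (right_mem_Icc.2 zero_le_one)
  simpa using key

theorem norm_image_sub_le_of_norm_hasFDerivAt_le_mul_norm_sub {f : E → F}
    {f' : E → E →L[ℝ] F} {s : Set E} {x₀ x : E} {L : ℝ} (hs : Convex ℝ s) (hx₀ : x₀ ∈ s)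
    (hx : x ∈ s) (hf : ∀ y ∈ s, HasFDerivAt f (f' y) y)
    (hbound : ∀ y ∈ s, ‖f' y‖ ≤ L * ‖y - x₀‖) :
    ‖f x - f x₀‖ ≤ L / 2 * ‖x - x₀‖ ^ 2 := by
  set d := x - x₀
  have hmem : ∀ θ ∈ Icc (0 : ℝ) 1, x₀ + θ • d ∈ s := fun θ hθ => hs.add_smul_sub_mem hx₀ hx hθ
  have hline : ∀ θ ∈ Icc (0 : ℝ) 1,
      HasDerivAt (fun θ : ℝ => f (x₀ + θ • d)) (f' (x₀ + θ • d) d) θ := fun θ hθ =>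
    (hf _ (hmem θ hθ)).comp_hasDerivAt θ (by
      simpa using ((hasDerivAt_id θ).smul_const d).const_add x₀)
  have hspeed : ∀ θ ∈ Icc (0 : ℝ) 1, ‖f' (x₀ + θ • d) d‖ ≤ L * ‖d‖ ^ 2 * θ := by
    intro θ hθ
    have hθd : ‖x₀ + θ • d - x₀‖ = θ * ‖d‖ := by
      rw [add_sub_cancel_left, norm_smul, Real.norm_of_nonneg hθ.1]
    calc ‖f' (x₀ + θ • d) d‖ ≤ ‖f' (x₀ + θ • d)‖ * ‖d‖ := (f' _).le_opNorm d
      _ ≤ L * (θ * ‖d‖) * ‖d‖ := by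
          gcongr
          exact hθd ▸ hbound _ (hmem θ hθ)
      _ = L * ‖d‖ ^ 2 * θ := by ring
  have := norm_sub_le_half_of_norm_deriv_le_mul hline hspeed
  simp only [one_smul, zero_smul, add_zero, d, add_sub_cancel] at this
  linarith

theorem norm_image_sub_le_mul_radius_of_norm_hasFDerivAt_le_mul_norm_sub
    {f : E → F} {f' : E → E →L[ℝ] F} {x₀ x y : E} {r L : ℝ} (hL : 0 ≤ L)
    (hf : ∀ z ∈ closedBall x₀ r, HasFDerivAt f (f' z) z)
    (hbound : ∀ z ∈ closedBall x₀ r, ‖f' z‖ ≤ L * ‖z - x₀‖)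
    (hx : x ∈ closedBall x₀ r) (hy : y ∈ closedBall x₀ r) :
    ‖f x - f y‖ ≤ L * r * ‖x - y‖ :=
  (convex_closedBall x₀ r).norm_image_sub_le_of_norm_hasFDerivWithin_le
    (fun z hz => (hf z hz).hasFDerivWithinAt)
    (fun z hz => (hbound z hz).trans <| by
      gcongr
      exact mem_closedBall_iff_norm.1 hz) hy hx

end MeanValue

/-- The Kantorovich radius `r* = (1 - √(1 - 2Lη)) / L`, the smaller root of
`L / 2 * r ^ 2 - r + η`. -/
noncomputable def kantorovichRadius (L η : ℝ) : ℝ := (1 - √(1 - 2 * L * η)) / L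

theorem kantorovichRadius_nonneg {L η : ℝ} (hL : 0 ≤ L) (hη : 0 ≤ η) :
    0 ≤ kantorovichRadius L η :=
  div_nonneg (sub_nonneg.2 <| Real.sqrt_le_one.2 <| by nlinarith) hL

theorem mul_kantorovichRadius {L : ℝ} (hL : L ≠ 0) (η : ℝ) :
    L * kantorovichRadius L η = 1 - √(1 - 2 * L * η) :=
  mul_div_cancel₀ _ hL

theorem half_mul_kantorovichRadius_sq_add_eq {L η : ℝ} (hL : L ≠ 0) (h : 2 * L * η ≤ 1) :
    L / 2 * kantorovichRadius L η ^ 2 + η = kantorovichRadius L η := by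
  have hsq := Real.sq_sqrt (sub_nonneg.2 h)
  unfold kantorovichRadius
  set s := √(1 - 2 * L * η)
  field_simp
  linear_combination hsq

theorem modified_newton_map_contraction_general
    {X : Type*} [NormedAddCommGroup X] [NormedSpace ℝ X]
    (F : X → X) (J : X → X →L[ℝ] X)
    (t₀ : X) (R η L : ℝ) (hL : 0 < L)
    (A : X ≃L[ℝ] X)
    (hF : ∀ t ∈ Metric.closedBall t₀ R, HasFDerivAt F (J t) t)
    (hstep : ‖(A.symm : X →L[ℝ] X) (F t₀)‖ ≤ η)
    (hLip : ∀ t ∈ Metric.closedBall t₀ R,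
      ‖(A.symm : X →L[ℝ] X).comp (J t) - ContinuousLinearMap.id ℝ X‖ ≤
        L * ‖t - t₀‖)
    (hηL : η * L < 1 / 2)
    (hRbig : (1 - Real.sqrt (1 - 2 * L * η)) / L ≤ R) :
    (1 - Real.sqrt (1 - 2 * η * L)) < 1 ∧
    (∀ x ∈ Metric.closedBall t₀ ((1 - Real.sqrt (1 - 2 * L * η)) / L),
      ∀ y ∈ Metric.closedBall t₀ ((1 - Real.sqrt (1 - 2 * L * η)) / L),
        ‖(x - (A.symm : X →L[ℝ] X) (F x)) - (y - (A.symm : X →L[ℝ] X) (F y))‖ ≤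
          (1 - Real.sqrt (1 - 2 * η * L)) * ‖x - y‖) ∧
    Set.MapsTo (fun t => t - (A.symm : X →L[ℝ] X) (F t))
      (Metric.closedBall t₀ ((1 - Real.sqrt (1 - 2 * L * η)) / L))
      (Metric.closedBall t₀ ((1 - Real.sqrt (1 - 2 * L * η)) / L)) := by
  have hr : (1 - √(1 - 2 * L * η)) / L = kantorovichRadius L η := rfl
  rw [hr] at hRbig
  rw [mul_right_comm 2 η L, hr, ← mul_kantorovichRadius hL.ne']
  set r := kantorovichRadius L η
  set G : X → X := fun t => t - (A.symm : X →L[ℝ] X) (F t)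
  have hη : 0 ≤ η := (norm_nonneg _).trans hstep
  have hball : closedBall t₀ r ⊆ closedBall t₀ R := closedBall_subset_closedBall hRbig
  have hG : ∀ t ∈ closedBall t₀ r,
      HasFDerivAt G (ContinuousLinearMap.id ℝ X - (A.symm : X →L[ℝ] X).comp (J t)) t :=
    fun t ht => (hasFDerivAt_id t).sub ((A.symm : X →L[ℝ] X).hasFDerivAt.comp t (hF t (hball ht)))
  have hG' : ∀ t ∈ closedBall t₀ r,
      ‖ContinuousLinearMap.id ℝ X - (A.symm : X →L[ℝ] X).comp (J t)‖ ≤ L * ‖t - t₀‖ :=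
    fun t ht => norm_sub_rev (E := X →L[ℝ] X) _ _ ▸ hLip t (hball ht)
  refine ⟨?_, fun x hx y hy => ?_, fun t ht => ?_⟩
  · rw [mul_kantorovichRadius hL.ne']
    exact sub_lt_self _ (Real.sqrt_pos.2 (by linarith))
  · exact norm_image_sub_le_mul_radius_of_norm_hasFDerivAt_le_mul_norm_sub hL.le hG hG' hx hy
  · rw [mem_closedBall_iff_norm] at ht ⊢
    calc ‖G t - t₀‖ ≤ ‖G t - G t₀‖ + ‖G t₀ - t₀‖ := norm_sub_le_norm_sub_add_norm_sub _ _ _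
      _ ≤ L / 2 * ‖t - t₀‖ ^ 2 + η := add_le_add
          (norm_image_sub_le_of_norm_hasFDerivAt_le_mul_norm_sub (convex_closedBall t₀ r)
            (mem_closedBall_self (kantorovichRadius_nonneg hL.le hη))
            (mem_closedBall_iff_norm.2 ht) hG hG')
          (by simpa [G] using hstep)
      _ ≤ L / 2 * r ^ 2 + η := by gcongr
      _ = r := half_mul_kantorovichRadius_sq_add_eq hL.ne' (by linarith)

/-- Contraction property of the modified Newton map `G(t) = t − J(t₀)⁻¹ F(t)`
on the ball of radius `r* = (1 − √(1 − 2Lη))/L`: it is `q`-Lipschitz there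
with `q = 1 − √(1 − 2ηL) < 1`, and maps the ball into itself. -/
theorem modified_newton_map_contraction
    {X : Type*} [NormedAddCommGroup X] [NormedSpace ℝ X]
    [FiniteDimensional ℝ X]
    (N : ℕ) (hN : Module.finrank ℝ X = N)
    (F : X → X) (J : X → X →L[ℝ] X)
    (t₀ : X) (R η L : ℝ) (hR : 0 < R) (hη : 0 < η) (hL : 0 < L)
    (A : X ≃L[ℝ] X) (hA : (A : X →L[ℝ] X) = J t₀)
    (hF : ∀ t ∈ Metric.closedBall t₀ R, HasFDerivAt F (J t) t)
    (hstep : ‖(A.symm : X →L[ℝ] X) (F t₀)‖ ≤ η)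
    (hLip : ∀ t ∈ Metric.closedBall t₀ R,
      ‖(A.symm : X →L[ℝ] X).comp (J t) - ContinuousLinearMap.id ℝ X‖ ≤
        L * ‖t - t₀‖)
    (hηL : η * L < 1 / 2)
    (hRbig : (1 - Real.sqrt (1 - 2 * L * η)) / L ≤ R) :
    (1 - Real.sqrt (1 - 2 * η * L)) < 1 ∧
    (∀ x ∈ Metric.closedBall t₀ ((1 - Real.sqrt (1 - 2 * L * η)) / L),
      ∀ y ∈ Metric.closedBall t₀ ((1 - Real.sqrt (1 - 2 * L * η)) / L),
        ‖(x - (A.symm : X →L[ℝ] X) (F x)) - (y - (A.symm : X →L[ℝ] X) (F y))‖ ≤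
          (1 - Real.sqrt (1 - 2 * η * L)) * ‖x - y‖) ∧
    Set.MapsTo (fun t => t - (A.symm : X →L[ℝ] X) (F t))
      (Metric.closedBall t₀ ((1 - Real.sqrt (1 - 2 * L * η)) / L))
      (Metric.closedBall t₀ ((1 - Real.sqrt (1 - 2 * L * η)) / L)) :=
  modified_newton_map_contraction_general F J t₀ R η L hL A hF hstep hLip hηL hRbig
end
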